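/- Let T ∈ ℝᴺˣᴺ be a symmetric Toeplitz matrix with first row (t₀, t₁, …, t_{N−1}). Then the circulant matrix C with first column c, where c₀ = t₀ and c_k = ((N−k)t_k + k t_{N−k})/N for 1 ≤ k ≤ N−1, minimizes ‖T − C‖_F over all real circulant matrices C. -/
import Mathlib

open Matrix Finset

lemma natAbs_sub_fin (N:ℕ) [NeZero N] (i k : Fin N) :
    Int.natAbs ((i:ℤ) - (((i - k : Fin N) : ℕ) : ℤ)) = if k.val ≤ i.val then k.val else N - k.val := by
  have hi := i.isLt; have hk := k.isLt
  have h : ((i - k : Fin N) : ℕ) = (N - k.val + i.val) % N := by rw [Fin.sub_def]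
  have hm : ((i - k : Fin N) : ℕ) = if k.val ≤ i.val then i.val - k.val else N - k.val + i.val := by
    rw [h]; split
    · rw [Nat.mod_eq_sub_mod (by omega), Nat.mod_eq_of_lt (by omega)]; omega
    · rw [Nat.mod_eq_of_lt (by omega)]
  rw [hm]; split <;> omega

lemma mean_min {ι : Type*} [Fintype ι] (a : ι → ℝ) (m x : ℝ)
    (h : (Fintype.card ι : ℝ) * m = ∑ i, a i) :
    ∑ i, (a i - m)^2 ≤ ∑ i, (a i - x)^2 := by
  have e : ∀ i : ι, (a i - x)^2 = (a i - m)^2 + (2*(m - x)*a i + (x^2 - m^2)) := by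
    intro i; ring
  have key : ∑ i, (a i - x)^2
      = ∑ i, (a i - m)^2 + (2*(m - x)*(∑ i, a i) + (Fintype.card ι : ℝ)*(x^2 - m^2)) := by
    simp_rw [e]
    rw [Finset.sum_add_distrib, Finset.sum_add_distrib, ← Finset.mul_sum,
      Finset.sum_const, nsmul_eq_mul, Finset.card_univ]
  rw [key, ← h]
  nlinarith [sq_nonneg (m - x), Nat.cast_nonneg (Fintype.card ι) (α := ℝ)]

/-- Frobenius-optimal circulant approximation of a symmetric Toeplitz matrix.
If `T_{i,j} = t_{|i−j|}`, then the circulant matrix with first column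
`c₀ = t₀`, `c_k = ((N−k) t_k + k t_{N−k})/N` (for `k ≠ 0`) minimizes the
Frobenius distance `‖T − C‖_F` over all real circulant matrices `C`. -/
theorem circulant_best_frobenius_approx
    (N : ℕ) (hN : 0 < N) (t : ℕ → ℝ)
    (T : Matrix (Fin N) (Fin N) ℝ)
    (hT : ∀ i j : Fin N, T i j = t (Int.natAbs ((i : ℤ) - (j : ℤ))))
    (copt : Fin N → ℝ)
    (hcopt : ∀ k : Fin N, copt k =
      if k.val = 0 then t 0
      else (((N : ℝ) - (k.val : ℝ)) * t k.val + (k.val : ℝ) * t (N - k.val)) / (N : ℝ)) :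
    ∀ c : Fin N → ℝ,
      (∑ i, ∑ j, (T i j - Matrix.circulant copt i j) ^ 2)
        ≤ ∑ i, ∑ j, (T i j - Matrix.circulant c i j) ^ 2 := by
  haveI : NeZero N := ⟨hN.ne'⟩
  intro c
  -- reindex the double sum by circulant classes
  have reindex : ∀ d : Fin N → ℝ,
      ∑ i, ∑ j, (T i j - Matrix.circulant d i j) ^ 2
        = ∑ k, ∑ i, (T i (i - k) - d k) ^ 2 := by
    intro d
    have h1 : ∀ i : Fin N, ∑ j, (T i j - Matrix.circulant d i j) ^ 2
        = ∑ k, (T i (i - k) - d k) ^ 2 := by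
      intro i
      rw [← Equiv.sum_comp (Equiv.subLeft i) (fun j => (T i j - Matrix.circulant d i j) ^ 2)]
      refine Finset.sum_congr rfl fun k _ => ?_
      simp [Matrix.circulant_apply, Equiv.subLeft, sub_sub_cancel]
    simp_rw [h1]
    exact Finset.sum_comm
  rw [reindex, reindex]
  refine Finset.sum_le_sum fun k _ => ?_
  refine mean_min (fun i => T i (i - k)) (copt k) (c k) ?_
  -- compute the class sum
  have hTik : ∀ i : Fin N, T i (i - k)
      = if k.val ≤ i.val then t k.val else t (N - k.val) := by
    intro i
    rw [hT, natAbs_sub_fin]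
    split <;> rfl
  simp_rw [hTik]
  rw [Fin.sum_univ_eq_sum_range (fun n => if k.val ≤ n then t k.val else t (N - k.val)) N]
  rw [Finset.sum_ite]
  have h1 : (range N).filter (fun n => k.val ≤ n) = Finset.Ico k.val N := by
    ext n; simp [Finset.mem_filter, Finset.mem_range, Finset.mem_Ico]; omega
  have h2 : (range N).filter (fun n => ¬ k.val ≤ n) = range k.val := by
    ext n; simp; omega
  rw [h1, h2, Finset.sum_const, Finset.sum_const, Nat.card_Ico, Finset.card_range,
    Fintype.card_fin, nsmul_eq_mul, nsmul_eq_mul]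
  have hk := k.isLt
  rw [hcopt]
  split
  · rename_i h0
    rw [h0]
    simp
  · have hN' : (N : ℝ) ≠ 0 := Nat.cast_ne_zero.mpr hN.ne'
    rw [Nat.cast_sub hk.le]
    field_simp
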